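/- Let γ be a Lipschitz graph over [a,b] (graph of an L-Lipschitz function). Let μ be a nonnegative measure with total mass β < 1 supported on an open set U in ℂ containing γ, and define φ(z) = ∫ log|z − ζ| dμ(ζ). Then ∫_γ e^{-φ} ds ≤ C, where C > 0 is a constant depending only on L, β, a, b. -/

import Mathlib

/-!
Jensen's inequality for `exp` against the probability measure `μ / β` gives
`e^{-φ(z)} ≤ 1 + ∫ |z - ζ|^{-β} dμ(ζ) / β`. Integrating along the graph and swapping the
integrals, it remains to bound `∫_a^b |γ(t) - ζ|^{-β} dt` uniformly in `ζ`. Since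
`|γ(t) - ζ| ≥ |t - Re ζ|`, this is at most `∫_a^b |t - c|^{-β} dt ≤ (b - a) + 2 / (1 - β)`,
finite because `β < 1`. Finally `ds ≤ √(1 + L²) dt` on an `L`-Lipschitz graph.
-/

open MeasureTheory Set Metric Complex Filter
open scoped ENNReal

/-- The point `t + i y(t)` of the graph of `y : ℝ → ℝ`. -/
noncomputable def graphPt (y : ℝ → ℝ) (t : ℝ) : ℂ := (t : ℂ) + (y t : ℂ) * Complex.I

/-- The arc length element `√(1 + y'(t)²)` of the graph of `y`. -/
noncomputable def arcElt (y : ℝ → ℝ) (t : ℝ) : ℝ := Real.sqrt (1 + deriv y t ^ 2)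

open scoped NNReal

lemma arcElt_le_of_lipschitzOnWith {K : ℝ≥0} {y : ℝ → ℝ} {a b t : ℝ}
    (hy : LipschitzOnWith K y (Icc a b)) (ht : t ∈ Ioo a b) :
    arcElt y t ≤ Real.sqrt (1 + (K : ℝ) ^ 2) := by
  have hderiv : |deriv y t| ≤ K := norm_deriv_le_of_lipschitzOn (Icc_mem_nhds ht.1 ht.2) hy
  exact Real.sqrt_le_sqrt (add_le_add_right (sq_le_sq' (abs_le.1 hderiv).1 (abs_le.1 hderiv).2) 1)

lemma lintegral_ofReal_mul_arcElt_le {K : ℝ≥0} {y : ℝ → ℝ} {a b : ℝ}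
    (hy : LipschitzOnWith K y (Icc a b)) (f : ℝ → ℝ) :
    ∫⁻ t in Icc a b, ENNReal.ofReal (f t * arcElt y t)
      ≤ ENNReal.ofReal (Real.sqrt (1 + (K : ℝ) ^ 2)) * ∫⁻ t in Icc a b, ENNReal.ofReal (f t) := by
  have hIoo : Ioo a b =ᵐ[volume] Icc a b := Ioo_ae_eq_Icc
  rw [← lintegral_const_mul' _ _ ENNReal.ofReal_ne_top, ← setLIntegral_congr hIoo,
    ← setLIntegral_congr hIoo]
  refine setLIntegral_mono' measurableSet_Ioo fun t ht => ?_
  rw [ENNReal.ofReal_mul' (q := arcElt y t) (Real.sqrt_nonneg _), mul_comm]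
  gcongr
  exact arcElt_le_of_lipschitzOnWith hy ht

lemma ofReal_exp_integral_le_lintegral {α : Type*} [MeasurableSpace α] {ν : Measure α}
    [IsProbabilityMeasure ν] {g : α → ℝ} (hg : Integrable g ν) :
    ENNReal.ofReal (Real.exp (∫ x, g x ∂ν)) ≤ ∫⁻ x, ENNReal.ofReal (Real.exp (g x)) ∂ν := by
  by_cases htop : ∫⁻ x, ENNReal.ofReal (Real.exp (g x)) ∂ν = ⊤
  · simp [htop]
  have hexp_nonneg : 0 ≤ᵐ[ν] fun x => Real.exp (g x) :=
    Eventually.of_forall fun x => (Real.exp_pos _).le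
  have hexp : Integrable (fun x => Real.exp (g x)) ν :=
    ⟨Real.continuous_exp.comp_aestronglyMeasurable hg.1,
      (hasFiniteIntegral_iff_ofReal hexp_nonneg).2 (lt_top_iff_ne_top.2 htop)⟩
  rw [← ofReal_integral_eq_lintegral_ofReal hexp hexp_nonneg]
  exact ENNReal.ofReal_le_ofReal <| convexOn_exp.map_integral_le Real.continuous_exp.continuousOn
    isClosed_univ (Eventually.of_forall fun _ => mem_univ _) hg hexp

/-- The `1 +` absorbs the junk cases `μ = 0` and `g` not integrable, where `∫ g ∂μ = 0`. -/
lemma ofReal_exp_integral_le_one_add_lintegral {α : Type*} [MeasurableSpace α] (μ : Measure α)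
    [IsFiniteMeasure μ] (g : α → ℝ) :
    ENNReal.ofReal (Real.exp (∫ x, g x ∂μ))
      ≤ 1 + ∫⁻ x, ENNReal.ofReal (Real.exp (μ.real univ * g x)) ∂((μ univ)⁻¹ • μ) := by
  rcases eq_zero_or_neZero μ with rfl | _
  · simp
  by_cases hg : Integrable g μ
  swap
  · simp [integral_undef hg]
  have hμ : μ = μ univ • ((μ univ)⁻¹ • μ) := by
    rw [smul_smul, ENNReal.mul_inv_cancel (NeZero.ne (μ univ)) (measure_ne_top μ univ), one_smul]
  have hint : ∫ x, g x ∂μ = ∫ x, μ.real univ * g x ∂((μ univ)⁻¹ • μ) := by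
    conv_lhs => rw [hμ]
    rw [integral_smul_measure, integral_const_mul, measureReal_def, smul_eq_mul]
  rw [hint]
  exact (ofReal_exp_integral_le_lintegral
    ((hg.smul_measure (ENNReal.inv_ne_top.2 (NeZero.ne _))).const_mul _)).trans le_add_self

lemma lintegral_Icc_zero_one_exp_neg_mul_log {m : ℝ} (hm : m < 1) :
    ∫⁻ s in Icc (0 : ℝ) 1, ENNReal.ofReal (Real.exp (-(m * Real.log s)))
      = ENNReal.ofReal (1 / (1 - m)) := by
  have hrpow : ∀ s ∈ Ioc (0 : ℝ) 1, Real.exp (-(m * Real.log s)) = s ^ (-m) := fun s hs => by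
    rw [Real.rpow_def_of_pos hs.1]; ring_nf
  have hint : IntegrableOn (fun s : ℝ => s ^ (-m)) (Ioc 0 1) := by
    simpa [intervalIntegrable_iff_integrableOn_Ioc_of_le zero_le_one] using
      intervalIntegral.intervalIntegrable_rpow' (r := -m) (a := 0) (b := 1) (by linarith)
  have hnonneg : 0 ≤ᵐ[volume.restrict (Ioc 0 1)] fun s : ℝ => s ^ (-m) :=
    (ae_restrict_iff' measurableSet_Ioc).2 <|
      Eventually.of_forall fun s hs => Real.rpow_nonneg hs.1.le _
  have hIoc : Ioc (0 : ℝ) 1 =ᵐ[volume] Icc 0 1 := Ioc_ae_eq_Icc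
  rw [← setLIntegral_congr hIoc, setLIntegral_congr_fun measurableSet_Ioc
      fun s hs => by rw [hrpow s hs],
    ← ofReal_integral_eq_lintegral_ofReal hint hnonneg,
    ← intervalIntegral.integral_of_le zero_le_one, integral_rpow (Or.inl (by linarith)),
    Real.one_rpow, Real.zero_rpow (by linarith)]
  norm_num [sub_eq_neg_add]

/-- Outside `[-1, 1]` the kernel `|s|^{-m}` is at most `1`; inside, it is the kernel on `[0, 1]`
evaluated at `s` or at `-s`. -/
lemma lintegral_Icc_exp_neg_mul_log_abs_sub_le {m : ℝ} (hm0 : 0 ≤ m) (hm1 : m < 1) (a b c : ℝ) :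
    ∫⁻ t in Icc a b, ENNReal.ofReal (Real.exp (-(m * Real.log |t - c|)))
      ≤ ENNReal.ofReal (b - a) + ENNReal.ofReal (2 / (1 - m)) := by
  set h : ℝ → ℝ≥0∞ :=
    (Icc 0 1).indicator fun s => ENNReal.ofReal (Real.exp (-(m * Real.log s))) with h_def
  have hh : Measurable h := by rw [h_def]; fun_prop (disch := exact measurableSet_Icc)
  have hkernel : ∀ s : ℝ,
      ENNReal.ofReal (Real.exp (-(m * Real.log |s|))) ≤ 1 + (h s + h (-s)) := by
    intro s
    rcases le_or_gt |s| 1 with hs | hs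
    · rcases le_total 0 s with hs0 | hs0
      · rw [abs_of_nonneg hs0] at hs ⊢
        exact le_add_left (le_add_right (by simp [h_def, indicator_of_mem, hs0, hs]))
      · rw [abs_of_nonpos hs0] at hs ⊢
        exact le_add_left (le_add_left (by simp [h_def, indicator_of_mem, hs0, hs]))
    · refine le_add_right (ENNReal.ofReal_le_one.2 (Real.exp_le_one_iff.2 ?_))
      have := Real.log_nonneg hs.le
      nlinarith
  calc ∫⁻ t in Icc a b, ENNReal.ofReal (Real.exp (-(m * Real.log |t - c|)))
      ≤ ∫⁻ t in Icc a b, (1 + (h (t - c) + h (c - t))) :=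
        lintegral_mono fun t => by simpa only [neg_sub] using hkernel (t - c)
    _ = volume (Icc a b) + ∫⁻ t in Icc a b, (h (t - c) + h (c - t)) := by
        rw [lintegral_add_left measurable_const, setLIntegral_const, one_mul]
    _ ≤ ENNReal.ofReal (b - a) + ((∫⁻ t, h (t - c)) + ∫⁻ t, h (c - t)) := by
        rw [Real.volume_Icc, ← lintegral_add_left (f := fun t => h (t - c)) (by fun_prop)]
        gcongr
        exact Measure.restrict_le_self
    _ = ENNReal.ofReal (b - a) + ENNReal.ofReal (2 / (1 - m)) := by
        rw [lintegral_sub_right_eq_self, lintegral_sub_left_eq_self, h_def,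
          lintegral_indicator measurableSet_Icc, lintegral_Icc_zero_one_exp_neg_mul_log hm1,
          ← ENNReal.ofReal_add (by bound) (by bound)]
        ring_nf

lemma lintegral_Icc_exp_neg_mul_log_norm_sub_le {γ : ℝ → ℂ} (hγ : ∀ t, (γ t).re = t) {m : ℝ}
    (hm0 : 0 ≤ m) (hm1 : m < 1) (a b : ℝ) (ζ : ℂ) :
    ∫⁻ t in Icc a b, ENNReal.ofReal (Real.exp (-(m * Real.log ‖γ t - ζ‖)))
      ≤ ENNReal.ofReal (b - a) + ENNReal.ofReal (2 / (1 - m)) := by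
  refine (lintegral_mono_ae ?_).trans (lintegral_Icc_exp_neg_mul_log_abs_sub_le hm0 hm1 a b ζ.re)
  filter_upwards [ae_restrict_of_ae (Measure.ae_ne volume ζ.re)] with t ht
  have hle : |t - ζ.re| ≤ ‖γ t - ζ‖ := by simpa [hγ t] using abs_re_le_norm (γ t - ζ)
  gcongr

theorem lintegral_Icc_exp_neg_potential_le {μ : Measure ℂ} [IsFiniteMeasure μ]
    (hμ : μ.real univ < 1) {γ : ℝ → ℂ} (hγ : ∀ t, (γ t).re = t) {a b : ℝ}
    (hγm : AEMeasurable γ (volume.restrict (Icc a b))) :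
    ∫⁻ t in Icc a b, ENNReal.ofReal (Real.exp (-∫ ζ, Real.log ‖γ t - ζ‖ ∂μ))
      ≤ ENNReal.ofReal (b - a)
        + (ENNReal.ofReal (b - a) + ENNReal.ofReal (2 / (1 - μ.real univ))) := by
  set m := μ.real univ
  set ν := (μ univ)⁻¹ • μ
  -- `exp (-(m * log r))` and not `r ^ (-m)`: they differ at `r = 0`, where `log 0 = 0`.
  set k : ℝ → ℂ → ℝ≥0∞ := fun t ζ => ENNReal.ofReal (Real.exp (-(m * Real.log ‖γ t - ζ‖)))
  have hjensen : ∀ t, ENNReal.ofReal (Real.exp (-∫ ζ, Real.log ‖γ t - ζ‖ ∂μ))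
      ≤ 1 + ∫⁻ ζ, k t ζ ∂ν := fun t => by
    have := ofReal_exp_integral_le_one_add_lintegral μ fun ζ => -Real.log ‖γ t - ζ‖
    simpa only [integral_neg, mul_neg] using this
  have hk : AEMeasurable (Function.uncurry k) ((volume.restrict (Icc a b)).prod ν) := by
    unfold k Function.uncurry
    fun_prop
  calc _ ≤ ∫⁻ t in Icc a b, (1 + ∫⁻ ζ, k t ζ ∂ν) := lintegral_mono hjensen
    _ = volume (Icc a b) + ∫⁻ ζ, (∫⁻ t in Icc a b, k t ζ) ∂ν := by
        rw [lintegral_add_left measurable_const, setLIntegral_const, one_mul,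
          lintegral_lintegral_swap hk]
    _ ≤ ENNReal.ofReal (b - a)
          + ∫⁻ _ : ℂ, (ENNReal.ofReal (b - a) + ENNReal.ofReal (2 / (1 - m))) ∂ν := by
        rw [Real.volume_Icc]
        gcongr with ζ
        exact lintegral_Icc_exp_neg_mul_log_norm_sub_le hγ measureReal_nonneg hμ a b ζ
    _ ≤ _ := by
        rw [lintegral_const]
        gcongr
        exact mul_le_of_le_one_right' (ENNReal.inv_mul_le_one _)

/-- Let `γ` be a Lipschitz graph over `[a,b]`, `μ` a nonnegative measure of total mass
`β < 1` supported on an open set `U` containing `γ`, and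
`φ(z) = ∫ log|z - ζ| dμ(ζ)` its logarithmic potential. Then `∫_γ e^{-φ} ds ≤ C` for a
constant `C > 0` depending only on `L, β, a, b`. -/
theorem potential_exp_integral_bound
    (L a b β : ℝ) (hab : a ≤ b) (hL : 0 ≤ L) (hβ0 : 0 ≤ β) (hβ1 : β < 1) :
    ∃ C : ℝ, 0 < C ∧
      ∀ (y : ℝ → ℝ), LipschitzOnWith L.toNNReal y (Set.Icc a b) →
      ∀ (U : Set ℂ), IsOpen U → graphPt y '' Set.Icc a b ⊆ U →
      ∀ (μ : Measure ℂ), μ Set.univ = ENNReal.ofReal β → μ Uᶜ = 0 →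
      ∀ φ : ℂ → ℝ, (∀ z, φ z = ∫ ζ, Real.log ‖z - ζ‖ ∂μ) →
        (∫⁻ t in Set.Icc a b,
            ENNReal.ofReal (Real.exp (-φ (graphPt y t)) * arcElt y t))
          ≤ ENNReal.ofReal C := by
  refine ⟨Real.sqrt (1 + L ^ 2) * (2 * (b - a) + 2 / (1 - β)), by positivity, ?_⟩
  intro y hy U _ _ μ hμ _ φ hφ
  have : IsFiniteMeasure μ := ⟨by simp [hμ]⟩
  have hmass : μ.real univ = β := by simp [measureReal_def, hμ, hβ0]
  have hgraph : AEMeasurable (graphPt y) (volume.restrict (Icc a b)) := by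
    have hyc := hy.continuousOn
    refine ContinuousOn.aemeasurable ?_ measurableSet_Icc
    unfold graphPt
    fun_prop
  have hpotential := lintegral_Icc_exp_neg_potential_le (hmass ▸ hβ1)
    (γ := graphPt y) (fun t => by simp [graphPt]) hgraph
  rw [hmass] at hpotential
  simp only [← hφ] at hpotential
  calc _ ≤ ENNReal.ofReal (Real.sqrt (1 + L ^ 2)) *
        ∫⁻ t in Icc a b, ENNReal.ofReal (Real.exp (-φ (graphPt y t))) := by
        simpa only [Real.coe_toNNReal L hL] using lintegral_ofReal_mul_arcElt_le hy _
    _ ≤ ENNReal.ofReal (Real.sqrt (1 + L ^ 2)) *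
        (ENNReal.ofReal (b - a) + (ENNReal.ofReal (b - a) + ENNReal.ofReal (2 / (1 - β)))) := by
        gcongr
    _ = _ := by
        rw [← ENNReal.ofReal_add (by linarith) (by positivity),
          ← ENNReal.ofReal_add (by linarith) (by positivity), ← ENNReal.ofReal_mul (by positivity)]
        ring_nf
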